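/- Let b₀ > 0, ℓ > 0, K₀ > 0 and 0 < β < 1. For λ > 0 define f_λ(x) := sin(√λ(|x|−ℓ))/(√λ |x|) + ℓ cos(√λ(|x|−ℓ))/|x| for x ≠ 0, and define ω^{asymp}(x) := (b₀/8π)( 1/|x| − 3/(2ℓ) + |x|²/(2ℓ³) ). Then there exist constants C > 0 and N₀ ≥ 1 such that for every N ≥ N₀ and every λ > 0 with |λ − 3b₀/(8πNℓ³)| ≤ K₀ N^{−(2−β)}, one has |N(1 − f_λ(x)) − ω^{asymp}(x)| ≤ C N^{−(1−β)} / |x| for all x with 0 < |x| ≤ ℓ. -/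

import Mathlib

/-!
Write `s = √λ` and `u = s(r - ℓ)` with `r = |x|`. Replacing `sin u` and `cos u` by their Taylor
polynomials of degree 3 and 2 turns `r · (N(1 - f_λ) - ω^{asymp})` into
`(Nλ - 3b₀/(8πℓ³)) (ℓ - r)² (r + 2ℓ) / 6`, up to remainders of size `N λ² ℓ⁵`.
The hypothesis on `λ` makes `Nλ - 3b₀/(8πℓ³)` of order `N^{-(1-β)}` and `λ ≲ 1/N`,
so `N λ² ≲ 1/N ≤ N^{-(1-β)}`.
-/

open MeasureTheory Real
open scoped ENNReal

noncomputable section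

abbrev E3 : Type := EuclideanSpace ℝ (Fin 3)

def neumannRadial (ℓ lam r : ℝ) : ℝ :=
  sin (√lam * (r - ℓ)) / (√lam * r) + ℓ * cos (√lam * (r - ℓ)) / r

def omegaAsymp (b₀ ℓ r : ℝ) : ℝ :=
  b₀ / (8 * π) * (1 / r - 3 / (2 * ℓ) + r ^ 2 / (2 * ℓ ^ 3))

lemma mul_sub_omegaAsymp_eq (N b₀ ℓ lam r : ℝ) (hlam : 0 < lam) (hr : r ≠ 0) (hℓ : ℓ ≠ 0) :
    r * (N * (1 - neumannRadial ℓ lam r) - omegaAsymp b₀ ℓ r)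
      = (N * lam - 3 * b₀ / (8 * π * ℓ ^ 3)) * ((ℓ - r) ^ 2 * (r + 2 * ℓ)) / 6
        - N * (sin (√lam * (r - ℓ)) - (√lam * (r - ℓ) - (√lam * (r - ℓ)) ^ 3 / 6)) / √lam
        - N * ℓ * (cos (√lam * (r - ℓ)) - (1 - (√lam * (r - ℓ)) ^ 2 / 2)) := by
  have hs : √lam ≠ 0 := (sqrt_pos.2 hlam).ne'
  have hπ : π ≠ 0 := pi_ne_zero
  unfold neumannRadial omegaAsymp
  rw [← sq_sqrt hlam.le, sqrt_sq (sqrt_nonneg lam)]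
  field_simp
  ring

lemma sin_cos_taylor_remainders_le {s ℓ r : ℝ} (hs : 0 < s) (hr : 0 ≤ r) (hrℓ : r ≤ ℓ)
    (hsℓ : s * ℓ ≤ 1) :
    |sin (s * (r - ℓ)) - (s * (r - ℓ) - (s * (r - ℓ)) ^ 3 / 6)| / s
      + ℓ * |cos (s * (r - ℓ)) - (1 - (s * (r - ℓ)) ^ 2 / 2)| ≤ ℓ ^ 5 * s ^ 4 / 16 := by
  have hu : |s * (r - ℓ)| ≤ s * ℓ := by
    rw [abs_mul, abs_of_pos hs, abs_of_nonpos (by linarith)]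
    gcongr
    linarith
  have hu1 : |s * (r - ℓ)| ≤ 1 := hu.trans hsℓ
  have hsin : |sin (s * (r - ℓ)) - (s * (r - ℓ) - (s * (r - ℓ)) ^ 3 / 6)| / s
      ≤ ℓ ^ 5 * s ^ 4 / 100 := by
    rw [div_le_iff₀ hs]
    calc _ ≤ |s * (r - ℓ)| ^ 5 / 100 := sin_bound hu1
      _ ≤ (s * ℓ) ^ 5 / 100 := by gcongr
      _ = _ := by ring
  have hcos : ℓ * |cos (s * (r - ℓ)) - (1 - (s * (r - ℓ)) ^ 2 / 2)|
      ≤ ℓ * ((s * ℓ) ^ 4 * (5 / 96)) := by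
    gcongr
    · linarith
    exact (cos_bound hu1).trans (by gcongr)
  have hpos : 0 ≤ ℓ ^ 5 * s ^ 4 := by have hℓ := hr.trans hrℓ; positivity
  calc _ ≤ ℓ ^ 5 * s ^ 4 / 100 + ℓ * ((s * ℓ) ^ 4 * (5 / 96)) := add_le_add hsin hcos
    _ = ℓ ^ 5 * s ^ 4 * (1 / 100 + 5 / 96) := by ring
    _ ≤ _ := by linarith

lemma abs_sub_omegaAsymp_le (N b₀ ℓ lam r : ℝ) (hN : 0 ≤ N) (hlam : 0 < lam) (hr : 0 < r)
    (hrℓ : r ≤ ℓ) (hlamℓ : lam * ℓ ^ 2 ≤ 1) :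
    |N * (1 - neumannRadial ℓ lam r) - omegaAsymp b₀ ℓ r|
      ≤ (|N * lam - 3 * b₀ / (8 * π * ℓ ^ 3)| * ℓ ^ 3 / 2 + N * lam ^ 2 * ℓ ^ 5 / 16) / r := by
  have hℓ : 0 < ℓ := hr.trans_le hrℓ
  have hs : 0 < √lam := sqrt_pos.2 hlam
  have hsℓ : √lam * ℓ ≤ 1 := by
    refine (pow_le_one_iff_of_nonneg (by positivity) two_ne_zero).1 ?_
    rwa [mul_pow, sq_sqrt hlam.le]
  have hpoly : |(ℓ - r) ^ 2 * (r + 2 * ℓ)| ≤ ℓ ^ 2 * (3 * ℓ) := by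
    rw [abs_of_nonneg (by positivity)]
    gcongr
    · nlinarith
    · linarith
  have hrem := sin_cos_taylor_remainders_le hs hr.le hrℓ hsℓ
  set X := N * (1 - neumannRadial ℓ lam r) - omegaAsymp b₀ ℓ r with hX
  rw [le_div_iff₀ hr, show |X| * r = |r * X| by rw [abs_mul, abs_of_pos hr, mul_comm], hX,
    mul_sub_omegaAsymp_eq N b₀ ℓ lam r hlam hr.ne' hℓ.ne']
  set R₃ := sin (√lam * (r - ℓ)) - (√lam * (r - ℓ) - (√lam * (r - ℓ)) ^ 3 / 6)
  set R₂ := cos (√lam * (r - ℓ)) - (1 - (√lam * (r - ℓ)) ^ 2 / 2)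
  have hlam2 : lam ^ 2 = √lam ^ 4 := by
    rw [show √lam ^ 4 = (√lam ^ 2) ^ 2 by ring, sq_sqrt hlam.le]
  calc _ ≤ |(N * lam - 3 * b₀ / (8 * π * ℓ ^ 3)) * ((ℓ - r) ^ 2 * (r + 2 * ℓ)) / 6|
          + |N * R₃ / √lam| + |N * ℓ * R₂| := (abs_sub _ _).trans (add_le_add_left (abs_sub _ _) _)
    _ = |N * lam - 3 * b₀ / (8 * π * ℓ ^ 3)| * |(ℓ - r) ^ 2 * (r + 2 * ℓ)| / 6
          + N * (|R₃| / √lam + ℓ * |R₂|) := by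
        simp only [abs_div, abs_mul, abs_of_nonneg hN, abs_of_pos hs, abs_of_pos hℓ,
          abs_of_pos (by norm_num : (0 : ℝ) < 6)]
        ring
    _ ≤ |N * lam - 3 * b₀ / (8 * π * ℓ ^ 3)| * (ℓ ^ 2 * (3 * ℓ)) / 6
          + N * (ℓ ^ 5 * √lam ^ 4 / 16) := by gcongr
    _ = _ := by rw [hlam2]; ring

lemma abs_mul_sub_le_rpow {N lam A K β : ℝ} (hN : 0 < N)
    (h : |lam - A / N| ≤ K * N ^ (-(2 - β))) : |N * lam - A| ≤ K * N ^ (-(1 - β)) := by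
  have hexp : N ^ (-(1 - β)) = N ^ (-(2 - β)) * N := by
    rw [← rpow_add_one hN.ne']
    ring_nf
  calc |N * lam - A| = N * |lam - A / N| := by
        rw [← abs_of_pos hN, ← abs_mul, abs_of_pos hN, mul_sub, mul_div_cancel₀ _ hN.ne']
    _ ≤ N * (K * N ^ (-(2 - β))) := by gcongr
    _ = _ := by rw [hexp]; ring

lemma le_div_of_abs_sub_div_le {N lam A K β : ℝ} (hN : 1 ≤ N) (hβ : β ≤ 1) (hK : 0 ≤ K)
    (h : |lam - A / N| ≤ K * N ^ (-(2 - β))) : lam ≤ (A + K) / N := by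
  have hpow : N ^ (-(2 - β)) ≤ N⁻¹ := by
    rw [← rpow_neg_one]
    exact rpow_le_rpow_of_exponent_le hN (by linarith)
  have hK' := mul_le_mul_of_nonneg_left hpow hK
  calc lam ≤ A / N + K * N⁻¹ := by linarith [(abs_le.1 h).2]
    _ = _ := by ring

lemma mul_sq_le_rpow {N lam C β : ℝ} (hN : 1 ≤ N) (hβ : 0 ≤ β) (hlam : 0 ≤ lam)
    (h : lam ≤ C / N) : N * lam ^ 2 ≤ C ^ 2 * N ^ (-(1 - β)) := by
  have hN0 : 0 < N := by linarith
  calc N * lam ^ 2 ≤ N * (C / N) ^ 2 := by gcongr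
    _ = C ^ 2 * N ^ (-1 : ℝ) := by rw [rpow_neg_one]; field_simp
    _ ≤ _ := by gcongr; linarith

theorem stmt14 (b₀ ℓ K₀ β : ℝ) (hℓ : 0 < ℓ) (hK₀ : 0 < K₀)
    (hβ0 : 0 < β) (hβ1 : β < 1) :
    ∃ C : ℝ, 0 < C ∧ ∃ N₀ : ℝ, 1 ≤ N₀ ∧
      ∀ N : ℝ, N₀ ≤ N → ∀ lam : ℝ, 0 < lam →
        |lam - 3 * b₀ / (8 * π * N * ℓ ^ 3)| ≤ K₀ * N ^ (-(2 - β)) →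
        ∀ x : E3, 0 < ‖x‖ → ‖x‖ ≤ ℓ →
          |N * (1 - (Real.sin (Real.sqrt lam * (‖x‖ - ℓ)) / (Real.sqrt lam * ‖x‖)
                + ℓ * Real.cos (Real.sqrt lam * (‖x‖ - ℓ)) / ‖x‖))
            - (b₀ / (8 * π)) * (1 / ‖x‖ - 3 / (2 * ℓ) + ‖x‖ ^ 2 / (2 * ℓ ^ 3))|
          ≤ C * N ^ (-(1 - β)) / ‖x‖ := by
  set A := 3 * b₀ / (8 * π * ℓ ^ 3)
  set C₁ := A + K₀
  refine ⟨K₀ * ℓ ^ 3 / 2 + C₁ ^ 2 * ℓ ^ 5 / 16, by positivity, max 1 (C₁ * ℓ ^ 2),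
    le_max_left _ _, ?_⟩
  intro N hN lam hlam hclose x hx hxℓ
  have hN1 : 1 ≤ N := (le_max_left _ _).trans hN
  have hN0 : 0 < N := by linarith
  rw [show 3 * b₀ / (8 * π * N * ℓ ^ 3) = A / N by simp only [A]; field_simp] at hclose
  have hlamC : lam ≤ C₁ / N := le_div_of_abs_sub_div_le hN1 hβ1.le hK₀.le hclose
  have hlamℓ : lam * ℓ ^ 2 ≤ 1 :=
    calc lam * ℓ ^ 2 ≤ C₁ / N * ℓ ^ 2 := by gcongr
      _ ≤ 1 := by rw [div_mul_eq_mul_div, div_le_one hN0]; exact (le_max_right _ _).trans hN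
  calc _ ≤ (|N * lam - A| * ℓ ^ 3 / 2 + N * lam ^ 2 * ℓ ^ 5 / 16) / ‖x‖ :=
        abs_sub_omegaAsymp_le N b₀ ℓ lam ‖x‖ hN0.le hlam hx hxℓ hlamℓ
    _ ≤ (K₀ * N ^ (-(1 - β)) * ℓ ^ 3 / 2 + C₁ ^ 2 * N ^ (-(1 - β)) * ℓ ^ 5 / 16) / ‖x‖ := by
        gcongr (?_ * ℓ ^ 3 / 2 + ?_ * ℓ ^ 5 / 16) / _
        exacts [abs_mul_sub_le_rpow hN0 hclose, mul_sq_le_rpow hN1 hβ0.le hlam.le hlamC]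
    _ = _ := by ring
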